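/- Fix n ≥ 1 relays with path gains a_k > 0 (source A to relay k) and b_k > 0 (relay k to source B), and let G_1, …, G_n, H_1, …, H_n be mutually independent unit-rate exponential fading powers. Let K* be the (almost surely unique) index maximizing (1/(a_k G_k) + 2/(b_k H_k))^{-1} over k = 1, …, n. Let τ_f, τ_b ∈ (0,1) with τ_f + τ_b = 1, let μ > 0, and let 0 < m < (2/3)·min{(1+μ)τ_f, (1+1/μ)τ_b}. For γ > 1 define Ĩ_1(γ) = log(1 + γ a_{K*} G_{K*}), Ĩ_2(γ) = log(1 + γ b_{K*} H_{K*}), and the outage probability ε(γ) = P[ {(2τ_f/3)·min(Ĩ_1, Ĩ_2) < (m/(1+μ)) log γ} ∪ {(2τ_b/3)·min(Ĩ_1, Ĩ_2) < (m/(1+1/μ)) log γ} ]. Then limsup_{γ→∞} log ε(γ)/log γ ≤ −n·(1 − 3m / (2·min{(1+μ)τ_f, (1+1/μ)τ_b})); that is, network coding through a single optimally selected relay that both receives and broadcasts achieves the same diversity-multiplexing tradeoff as network coding with collaborative reception and optimal broadcast relay selection. -/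

import Mathlib

/-!
Write `X_k = a_k G_k`, `Y_k = b_k H_k`, `r = 3m / (2 min {(1+μ)τ_f, (1+1/μ)τ_b})` and
`t(γ) = (γ^r - 1)/γ ≍ γ^(r-1)`. Almost surely, the two rate constraints together say exactly that
`min (X_{K*}, Y_{K*}) < t(γ)`. Since `min (x, y) / 3 ≤ (1/x + 2/y)⁻¹ ≤ min (x, y)`, the selected
relay beats every other one up to a factor `3`, so on this event `min (X_k, Y_k) < 3t` for all `k`;
by independence and `P[G < s] ≤ s` the outage probability is `O(t^n)`. Conversely the event
contains `{G_k ≤ t/(2a_k) for all k}`, of probability `≳ t^n`. Hence `log ε / log γ` actually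
converges to `n (r - 1)`.
-/

open MeasureTheory ProbabilityTheory Filter

/-- A real random variable `g` is unit-rate exponential (w.r.t. measure `ℙ`) if
`ℙ[g > x] = e^{-x}` for all `x ≥ 0`. -/
def IsUnitExp {Ω : Type*} [MeasureSpace Ω] (g : Ω → ℝ) : Prop :=
  ∀ x : ℝ, 0 ≤ x → ℙ {ω | x < g ω} = ENNReal.ofReal (Real.exp (-x))

open Real Topology

/-- The selection criterion for `K*`: half the network-coding sum rate through one relay. -/
noncomputable def ncRate (x y : ℝ) : ℝ := (1 / x + 2 / y)⁻¹

lemma ncRate_le_min {x y : ℝ} (hx : 0 < x) (hy : 0 < y) : ncRate x y ≤ min x y := by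
  rw [ncRate, le_min_iff]
  constructor
  · rw [inv_le_comm₀ (by positivity) hx]
    exact le_add_of_nonneg_right (by positivity) |>.trans_eq' (one_div x)
  · rw [inv_le_comm₀ (by positivity) hy]
    calc y⁻¹ ≤ 2 / y := by rw [div_eq_mul_inv]; linarith [inv_pos.2 hy]
      _ ≤ 1 / x + 2 / y := le_add_of_nonneg_left (by positivity)

lemma min_div_three_le_ncRate {x y : ℝ} (hx : 0 < x) (hy : 0 < y) :
    min x y / 3 ≤ ncRate x y := by
  have hxy : 0 < min x y := lt_min hx hy
  rw [ncRate, le_inv_comm₀ (by positivity) (by positivity), inv_div]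
  calc 1 / x + 2 / y ≤ 1 / min x y + 2 / min x y := by
        gcongr
        exacts [min_le_left x y, min_le_right x y]
    _ = 3 / min x y := by ring

lemma min_le_three_mul_min_of_ncRate_le {x y x' y' : ℝ} (hx : 0 < x) (hy : 0 < y)
    (hx' : 0 < x') (hy' : 0 < y') (h : ncRate x y ≤ ncRate x' y') :
    min x y ≤ 3 * min x' y' := by
  linarith [min_div_three_le_ncRate hx hy, ncRate_le_min hx' hy']

lemma log_one_add_mul_lt_mul_log_iff {γ ρ x : ℝ} (hγ : 0 < γ) (hx : 0 ≤ x) :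
    log (1 + γ * x) < ρ * log γ ↔ x < (γ ^ ρ - 1) / γ := by
  rw [← log_rpow hγ, log_lt_log_iff (by positivity) (by positivity), lt_div_iff₀ hγ]
  constructor <;> intro h <;> linarith

lemma min_log_one_add_mul_lt_mul_log_iff {γ ρ x y : ℝ} (hγ : 0 < γ) (hx : 0 ≤ x) (hy : 0 ≤ y) :
    min (log (1 + γ * x)) (log (1 + γ * y)) < ρ * log γ ↔ min x y < (γ ^ ρ - 1) / γ := by
  simp only [min_lt_iff, log_one_add_mul_lt_mul_log_iff hγ hx, log_one_add_mul_lt_mul_log_iff hγ hy]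

lemma outage_iff {τf τb μ m M L : ℝ} (hτf : 0 < τf) (hτb : 0 < τb) (hμ : 0 < μ) (hm : 0 ≤ m)
    (hL : 0 < L) :
    (2 * τf / 3) * M < (m / (1 + μ)) * L ∨ (2 * τb / 3) * M < (m / (1 + 1/μ)) * L ↔
      M < 3 * m / (2 * min ((1 + μ) * τf) ((1 + 1/μ) * τb)) * L := by
  have hf : (2 * τf / 3) * M < (m / (1 + μ)) * L ↔ M < 3 * m / (2 * ((1 + μ) * τf)) * L := by
    have h : m / (1 + μ) * L = 2 * τf / 3 * (3 * m / (2 * ((1 + μ) * τf)) * L) := by field_simp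
    rw [h, mul_lt_mul_iff_right₀ (by positivity)]
  have hb : (2 * τb / 3) * M < (m / (1 + 1/μ)) * L ↔ M < 3 * m / (2 * ((1 + 1/μ) * τb)) * L := by
    have h : m / (1 + 1/μ) * L = 2 * τb / 3 * (3 * m / (2 * ((1 + 1/μ) * τb)) * L) := by field_simp
    rw [h, mul_lt_mul_iff_right₀ (by positivity)]
  rw [hf, hb]
  rcases le_total ((1 + μ) * τf) ((1 + 1/μ) * τb) with h | h
  · rw [min_eq_left h, or_iff_left_of_imp]
    intro h'
    exact h'.trans_le (by gcongr)
  · rw [min_eq_right h, or_iff_right_of_imp]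
    intro h'
    exact h'.trans_le (by gcongr)

lemma div_two_le_one_sub_exp_neg {x : ℝ} (hx₀ : 0 ≤ x) (hx₁ : x ≤ 1) : x / 2 ≤ 1 - exp (-x) := by
  have h : exp (-x) * (1 + x) ≤ 1 := by
    calc exp (-x) * (1 + x) ≤ exp (-x) * exp x := by gcongr; linarith [add_one_le_exp x]
      _ = 1 := by rw [← exp_add, neg_add_cancel, exp_zero]
  nlinarith [exp_pos (-x)]

lemma ProbabilityTheory.iIndepFun.measure_iInter_union_le {Ω ι β : Type*} [MeasurableSpace Ω]
    {μ : Measure Ω} [Fintype ι] [MeasurableSpace β] {f g : ι → Ω → β}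
    (h : iIndepFun (Sum.elim f g) μ)
    {s t : ι → Set β} (hs : ∀ i, MeasurableSet (s i)) (ht : ∀ i, MeasurableSet (t i)) :
    μ (⋂ i, (f i ⁻¹' s i ∪ g i ⁻¹' t i)) ≤ ∏ i, (μ (f i ⁻¹' s i) + μ (g i ⁻¹' t i)) := by
  classical
  -- Distributing `⋂ (Aᵢ ∪ Bᵢ)` over choices `ι → Bool` leaves intersections over distinct
  -- coordinates of the independent family.
  let A : ι → Bool → Set Ω := fun i c => bif c then f i ⁻¹' s i else g i ⁻¹' t i
  have hcover : ⋂ i, (f i ⁻¹' s i ∪ g i ⁻¹' t i) ⊆ ⋃ c : ι → Bool, ⋂ i, A i (c i) := by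
    intro ω hω
    simp only [Set.mem_iInter, Set.mem_union] at hω
    refine Set.mem_iUnion.2 ⟨fun i => decide (ω ∈ f i ⁻¹' s i), Set.mem_iInter.2 fun i => ?_⟩
    by_cases hi : ω ∈ f i ⁻¹' s i
    · simp [A, hi]
    · simpa [A, hi] using (hω i).resolve_left hi
  have hindep : ∀ c : ι → Bool, μ (⋂ i, A i (c i)) = ∏ i, μ (A i (c i)) := by
    intro c
    let e : ι → ι ⊕ ι := fun i => bif c i then Sum.inl i else Sum.inr i
    have he : e.Injective := by
      intro i j hij
      cases hi : c i <;> cases hj : c j <;> simp_all [e]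
    refine (h.precomp he).meas_iInter fun i => ?_
    cases hi : c i
    · exact ⟨t i, ht i, by simp [A, e, hi]⟩
    · exact ⟨s i, hs i, by simp [A, e, hi]⟩
  calc μ (⋂ i, (f i ⁻¹' s i ∪ g i ⁻¹' t i)) ≤ ∑ c : ι → Bool, μ (⋂ i, A i (c i)) :=
        (measure_mono hcover).trans (measure_iUnion_fintype_le _ _)
    _ = ∏ i, ∑ c : Bool, μ (A i c) := by simp_rw [hindep, Fintype.prod_sum]
    _ = ∏ i, (μ (f i ⁻¹' s i) + μ (g i ⁻¹' t i)) := by simp [A]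

section UnitExp

variable {Ω : Type*} [MeasureSpace Ω] [IsProbabilityMeasure (ℙ : Measure Ω)] {g : Ω → ℝ}

namespace IsUnitExp

lemma measure_le (he : IsUnitExp g) (hg : Measurable g) {x : ℝ} (hx : 0 ≤ x) :
    ℙ {ω | g ω ≤ x} = ENNReal.ofReal (1 - exp (-x)) := by
  have hcompl : {ω | g ω ≤ x} = {ω | x < g ω}ᶜ := by ext; simp
  rw [hcompl, measure_compl (measurableSet_lt measurable_const hg) (measure_ne_top _ _), he x hx,
    measure_univ, ← ENNReal.ofReal_one, ENNReal.ofReal_sub _ (exp_nonneg _)]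

lemma ae_pos (he : IsUnitExp g) (hg : Measurable g) : ∀ᵐ ω, 0 < g ω := by
  rw [ae_iff]
  simpa using he.measure_le hg le_rfl

lemma measure_lt_le (he : IsUnitExp g) (hg : Measurable g) {x : ℝ} (hx : 0 ≤ x) :
    ℙ {ω | g ω < x} ≤ ENNReal.ofReal x :=
  calc ℙ {ω | g ω < x} ≤ ℙ {ω | g ω ≤ x} := measure_mono fun _ h => le_of_lt (α := ℝ) h
    _ ≤ ENNReal.ofReal x := by
      rw [he.measure_le hg hx]
      exact ENNReal.ofReal_le_ofReal (by linarith [one_sub_le_exp_neg x])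

lemma ofReal_div_two_le_measure_le (he : IsUnitExp g) (hg : Measurable g) {x : ℝ} (hx₀ : 0 ≤ x)
    (hx₁ : x ≤ 1) : ENNReal.ofReal (x / 2) ≤ ℙ {ω | g ω ≤ x} := by
  rw [he.measure_le hg hx₀]
  exact ENNReal.ofReal_le_ofReal (div_two_le_one_sub_exp_neg hx₀ hx₁)

end IsUnitExp

end UnitExp

lemma tendsto_log_div_log_of_le_of_le {f g : ℝ → ℝ} {e c₁ c₂ : ℝ} (hc₁ : 0 < c₁) (hc₂ : 0 < c₂)
    (hg : ∀ᶠ x in atTop, 0 < g x) (hfg : ∀ᶠ x in atTop, c₁ * g x ≤ f x ∧ f x ≤ c₂ * g x)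
    (hlim : Tendsto (fun x => log (g x) / log x) atTop (𝓝 e)) :
    Tendsto (fun x => log (f x) / log x) atTop (𝓝 e) := by
  have hscale : ∀ c, 0 < c → Tendsto (fun x => log (c * g x) / log x) atTop (𝓝 e) := by
    intro c hc
    have h := (tendsto_const_nhds (x := log c)).div_atTop tendsto_log_atTop |>.add hlim
    rw [zero_add] at h
    refine h.congr' ?_
    filter_upwards [hg] with x hx
    rw [log_mul hc.ne' hx.ne', add_div]
  refine tendsto_of_tendsto_of_tendsto_of_le_of_le' (hscale c₁ hc₁) (hscale c₂ hc₂) ?_ ?_ <;>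
    filter_upwards [hg, hfg, eventually_gt_atTop 1] with x hgx hfx hx <;>
    refine div_le_div_of_nonneg_right ?_ (log_nonneg hx.le)
  exacts [log_le_log (mul_pos hc₁ hgx) hfx.1,
    log_le_log ((mul_pos hc₁ hgx).trans_le hfx.1) hfx.2]

lemma tendsto_rpow_sub_one_div_nhds_zero {ρ : ℝ} (hρ : ρ < 1) :
    Tendsto (fun γ : ℝ => (γ ^ ρ - 1) / γ) atTop (𝓝 0) := by
  have h := (tendsto_rpow_neg_atTop (sub_pos.2 hρ)).sub tendsto_inv_atTop_zero
  rw [sub_zero] at h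
  refine h.congr' ?_
  filter_upwards [eventually_gt_atTop 0] with γ hγ
  rw [neg_sub, sub_div, Real.rpow_sub_one hγ.ne', one_div]

lemma tendsto_log_rpow_sub_one_div_div_log {ρ : ℝ} (hρ : 0 < ρ) :
    Tendsto (fun γ : ℝ => log ((γ ^ ρ - 1) / γ) / log γ) atTop (𝓝 (ρ - 1)) := by
  refine tendsto_log_div_log_of_le_of_le (g := fun γ => γ ^ (ρ - 1)) one_half_pos one_pos
    ?_ ?_ (tendsto_const_nhds.congr' ?_)
  · filter_upwards [eventually_gt_atTop 0] with γ hγ using rpow_pos_of_pos hγ _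
  · filter_upwards [eventually_gt_atTop 0, (tendsto_rpow_atTop hρ).eventually_ge_atTop 2]
      with γ hγ hγρ
    rw [Real.rpow_sub_one hγ.ne']
    constructor
    · rw [← mul_div_assoc]; gcongr; linarith
    · rw [one_mul]; gcongr; linarith
  · filter_upwards [eventually_gt_atTop 1] with γ hγ
    rw [log_rpow (by linarith), mul_div_cancel_right₀ _ (log_pos hγ).ne']

section Relay

variable {Ω : Type*} [MeasureSpace Ω] {n : ℕ} {a b : Fin n → ℝ} {G H : Fin n → Ω → ℝ}
  {K : Ω → Fin n}

lemma measure_min_log_lt_eq (ha : ∀ k, 0 < a k) (hb : ∀ k, 0 < b k)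
    (hpos : ∀ᵐ ω, ∀ k, 0 < G k ω ∧ 0 < H k ω) {γ ρ : ℝ} (hγ : 0 < γ) :
    ℙ {ω | min (log (1 + γ * (a (K ω) * G (K ω) ω))) (log (1 + γ * (b (K ω) * H (K ω) ω)))
        < ρ * log γ}
      = ℙ {ω | min (a (K ω) * G (K ω) ω) (b (K ω) * H (K ω) ω) < (γ ^ ρ - 1) / γ} := by
  refine measure_congr (eventuallyEq_set.2 ?_)
  filter_upwards [hpos] with ω hω
  obtain ⟨hG, hH⟩ := hω (K ω)
  exact min_log_one_add_mul_lt_mul_log_iff hγ (mul_pos (ha _) hG).le (mul_pos (hb _) hH).le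

lemma measure_min_lt_le [IsProbabilityMeasure (ℙ : Measure Ω)]
    (ha : ∀ k, 0 < a k) (hb : ∀ k, 0 < b k)
    (hGmeas : ∀ k, Measurable (G k)) (hHmeas : ∀ k, Measurable (H k))
    (hindep : iIndepFun (Sum.elim G H) ℙ)
    (hGexp : ∀ k, IsUnitExp (G k)) (hHexp : ∀ k, IsUnitExp (H k))
    (hpos : ∀ᵐ ω, ∀ k, 0 < G k ω ∧ 0 < H k ω)
    (hK : ∀ ω k, ncRate (a k * G k ω) (b k * H k ω)
      ≤ ncRate (a (K ω) * G (K ω) ω) (b (K ω) * H (K ω) ω))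
    {t : ℝ} (ht : 0 ≤ t) :
    ℙ {ω | min (a (K ω) * G (K ω) ω) (b (K ω) * H (K ω) ω) < t}
      ≤ ENNReal.ofReal ((3 * t) ^ n * ∏ k, (1 / a k + 1 / b k)) := by
  have hsub : {ω | min (a (K ω) * G (K ω) ω) (b (K ω) * H (K ω) ω) < t}
      ≤ᵐ[ℙ] ⋂ k, (G k ⁻¹' Set.Iio (3 * t / a k) ∪ H k ⁻¹' Set.Iio (3 * t / b k)) := by
    filter_upwards [hpos] with ω hω (hlt : _ < t)
    refine Set.mem_iInter.2 fun k => ?_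
    have hsel := min_le_three_mul_min_of_ncRate_le (mul_pos (ha k) (hω k).1)
      (mul_pos (hb k) (hω k).2) (mul_pos (ha _) (hω (K ω)).1) (mul_pos (hb _) (hω (K ω)).2)
      (hK ω k)
    have hk : min (a k * G k ω) (b k * H k ω) < 3 * t := by linarith
    simpa only [Set.mem_union, Set.mem_preimage, Set.mem_Iio, lt_div_iff₀ (ha k),
      lt_div_iff₀ (hb k), mul_comm (G k ω), mul_comm (H k ω), ← min_lt_iff] using hk
  have hfactor : ∀ k, ℙ (G k ⁻¹' Set.Iio (3 * t / a k)) + ℙ (H k ⁻¹' Set.Iio (3 * t / b k))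
      ≤ ENNReal.ofReal (3 * t * (1 / a k + 1 / b k)) := by
    intro k
    rw [mul_add, ENNReal.ofReal_add (by positivity [ha k]) (by positivity [hb k]), mul_one_div,
      mul_one_div]
    exact add_le_add ((hGexp k).measure_lt_le (hGmeas k) (by positivity [ha k]))
      ((hHexp k).measure_lt_le (hHmeas k) (by positivity [hb k]))
  calc _ ≤ ∏ k, (ℙ (G k ⁻¹' Set.Iio (3 * t / a k)) + ℙ (H k ⁻¹' Set.Iio (3 * t / b k))) :=
        (measure_mono_ae hsub).trans (hindep.measure_iInter_union_le
          (fun _ => measurableSet_Iio) (fun _ => measurableSet_Iio))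
    _ ≤ ∏ k, ENNReal.ofReal (3 * t * (1 / a k + 1 / b k)) :=
        Finset.prod_le_prod' fun k _ => hfactor k
    _ = _ := by
        rw [← ENNReal.ofReal_prod_of_nonneg fun k _ => by positivity [ha k, hb k],
          Finset.prod_mul_distrib, Finset.prod_const, Finset.card_univ, Fintype.card_fin]

lemma le_measure_min_lt [IsProbabilityMeasure (ℙ : Measure Ω)] (ha : ∀ k, 0 < a k)
    (hGmeas : ∀ k, Measurable (G k)) (hindep : iIndepFun G ℙ) (hGexp : ∀ k, IsUnitExp (G k))
    {t : ℝ} (ht : 0 < t) (hta : ∀ k, t ≤ 2 * a k) :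
    ENNReal.ofReal ((t / 4) ^ n / ∏ k, a k)
      ≤ ℙ {ω | min (a (K ω) * G (K ω) ω) (b (K ω) * H (K ω) ω) < t} := by
  have hsub : ⋂ k, {ω | G k ω ≤ t / (2 * a k)}
      ⊆ {ω | min (a (K ω) * G (K ω) ω) (b (K ω) * H (K ω) ω) < t} := by
    intro ω hω
    have hK := Set.mem_iInter.1 hω (K ω)
    rw [Set.mem_ofPred_eq, le_div_iff₀ (by linarith [ha (K ω)])] at hK
    have hlt : a (K ω) * G (K ω) ω < t := by linarith
    exact (min_le_left _ _).trans_lt hlt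
  calc ENNReal.ofReal ((t / 4) ^ n / ∏ k, a k)
      = ∏ k, ENNReal.ofReal (t / (2 * a k) / 2) := by
        rw [← ENNReal.ofReal_prod_of_nonneg fun k _ => by positivity [ha k]]
        congr 1
        calc (t / 4) ^ n / ∏ k, a k = ∏ k, t / 4 / a k := by
              rw [Finset.prod_div_distrib, Finset.prod_const, Finset.card_univ, Fintype.card_fin]
          _ = ∏ k, t / (2 * a k) / 2 := Finset.prod_congr rfl fun k _ => by ring
    _ ≤ ∏ k, ℙ {ω | G k ω ≤ t / (2 * a k)} := by
        refine Finset.prod_le_prod' fun k _ => ?_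
        exact (hGexp k).ofReal_div_two_le_measure_le (hGmeas k) (by positivity [ha k])
          ((div_le_one (by positivity [ha k])).2 (hta k))
    _ = ℙ (⋂ k, {ω | G k ω ≤ t / (2 * a k)}) :=
        (hindep.meas_iInter fun k => ⟨Set.Iic _, measurableSet_Iic, rfl⟩).symm
    _ ≤ _ := measure_mono hsub

lemma tendsto_log_measure_min_lt_div_log [IsProbabilityMeasure (ℙ : Measure Ω)]
    (ha : ∀ k, 0 < a k) (hb : ∀ k, 0 < b k)
    (hGmeas : ∀ k, Measurable (G k)) (hHmeas : ∀ k, Measurable (H k))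
    (hindep : iIndepFun (Sum.elim G H) ℙ)
    (hGexp : ∀ k, IsUnitExp (G k)) (hHexp : ∀ k, IsUnitExp (H k))
    (hpos : ∀ᵐ ω, ∀ k, 0 < G k ω ∧ 0 < H k ω)
    (hK : ∀ ω k, ncRate (a k * G k ω) (b k * H k ω)
      ≤ ncRate (a (K ω) * G (K ω) ω) (b (K ω) * H (K ω) ω))
    {ρ : ℝ} (hρ₀ : 0 < ρ) (hρ₁ : ρ < 1) :
    Tendsto (fun γ => log (ℙ {ω | min (a (K ω) * G (K ω) ω) (b (K ω) * H (K ω) ω)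
      < (γ ^ ρ - 1) / γ}).toReal / log γ) atTop (𝓝 (n * (ρ - 1))) := by
  have hA : 0 < ∏ k, a k := Finset.prod_pos fun k _ => ha k
  have hB : 0 < ∏ k, (1 / a k + 1 / b k) :=
    Finset.prod_pos fun k _ => add_pos (one_div_pos.2 (ha k)) (one_div_pos.2 (hb k))
  have hsmall : ∀ᶠ γ : ℝ in atTop, 1 < γ ∧ ∀ k, (γ ^ ρ - 1) / γ ≤ 2 * a k :=
    (eventually_gt_atTop 1).and <| eventually_all.2 fun k =>
      (tendsto_rpow_sub_one_div_nhds_zero hρ₁).eventually_le_const (by linarith [ha k])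
  have hindepG := hindep.precomp Sum.inl_injective
  have ht : ∀ γ : ℝ, 1 < γ → 0 < (γ ^ ρ - 1) / γ := fun γ hγ =>
    div_pos (sub_pos.2 (one_lt_rpow hγ hρ₀)) (by linarith)
  refine tendsto_log_div_log_of_le_of_le (g := fun γ => ((γ ^ ρ - 1) / γ) ^ n)
    (c₁ := 1 / (4 ^ n * ∏ k, a k)) (c₂ := 3 ^ n * ∏ k, (1 / a k + 1 / b k))
    (by positivity) (by positivity) ?_ ?_ ?_
  · filter_upwards [hsmall] with γ hγ using pow_pos (ht γ hγ.1) n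
  · filter_upwards [hsmall] with γ hγ
    constructor
    · refine le_of_eq_of_le ?_ ((ENNReal.ofReal_le_iff_le_toReal (measure_ne_top _ _)).1
        (le_measure_min_lt ha hGmeas hindepG hGexp (ht γ hγ.1) hγ.2))
      rw [div_pow _ (4 : ℝ)]
      field_simp
    · refine (ENNReal.toReal_le_of_le_ofReal (by positivity [ht γ hγ.1]) (measure_min_lt_le ha hb
        hGmeas hHmeas hindep hGexp hHexp hpos hK (ht γ hγ.1).le)).trans_eq ?_
      rw [mul_pow]
      ring
  · refine ((tendsto_log_rpow_sub_one_div_div_log hρ₀).const_mul (n : ℝ)).congr' ?_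
    filter_upwards with γ
    rw [log_pow, mul_div_assoc]

end Relay

theorem nc_optimal_relay_dmt_general
    {Ω : Type*} [MeasureSpace Ω] [IsProbabilityMeasure (ℙ : Measure Ω)]
    (n : ℕ) (a b : Fin n → ℝ) (G H : Fin n → Ω → ℝ)
    (ha : ∀ k, 0 < a k) (hb : ∀ k, 0 < b k)
    (hGmeas : ∀ k, Measurable (G k)) (hHmeas : ∀ k, Measurable (H k))
    (hindep : iIndepFun (Sum.elim G H) ℙ)
    (hGexp : ∀ k, IsUnitExp (G k)) (hHexp : ∀ k, IsUnitExp (H k))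
    (K : Ω → Fin n)
    (hK : ∀ ω k, (1 / (a k * G k ω) + 2 / (b k * H k ω))⁻¹
            ≤ (1 / (a (K ω) * G (K ω) ω) + 2 / (b (K ω) * H (K ω) ω))⁻¹)
    (τf τb μ m : ℝ)
    (hτf : 0 < τf ∧ τf < 1) (hτb : 0 < τb ∧ τb < 1)
    (hμ : 0 < μ)
    (hm : 0 < m) (hm' : m < (2/3) * min ((1 + μ) * τf) ((1 + 1/μ) * τb)) :
    limsup (fun γ : ℝ =>
        Real.log (ℙ {ω |
            (2 * τf / 3) * min (Real.log (1 + γ * (a (K ω) * G (K ω) ω)))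
                               (Real.log (1 + γ * (b (K ω) * H (K ω) ω)))
              < (m / (1 + μ)) * Real.log γ ∨
            (2 * τb / 3) * min (Real.log (1 + γ * (a (K ω) * G (K ω) ω)))
                               (Real.log (1 + γ * (b (K ω) * H (K ω) ω)))
              < (m / (1 + 1/μ)) * Real.log γ}).toReal / Real.log γ) atTop
      ≤ -((n : ℝ) * (1 - 3 * m / (2 * min ((1 + μ) * τf) ((1 + 1/μ) * τb)))) := by
  obtain ⟨hτf₀, -⟩ := hτf
  obtain ⟨hτb₀, -⟩ := hτb
  set r := 3 * m / (2 * min ((1 + μ) * τf) ((1 + 1/μ) * τb))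
  have hc : 0 < min ((1 + μ) * τf) ((1 + 1/μ) * τb) := lt_min (by positivity) (by positivity)
  have hr₀ : 0 < r := by positivity
  have hr₁ : r < 1 := by rw [div_lt_one (by positivity)]; linarith
  have hpos : ∀ᵐ ω, ∀ k, 0 < G k ω ∧ 0 < H k ω := ae_all_iff.2 fun k =>
    ((hGexp k).ae_pos (hGmeas k)).and ((hHexp k).ae_pos (hHmeas k))
  have hε := tendsto_log_measure_min_lt_div_log ha hb hGmeas hHmeas hindep hGexp hHexp hpos hK
    hr₀ hr₁
  refine le_of_eq ((hε.congr' ?_).limsup_eq.trans (by ring))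
  filter_upwards [eventually_gt_atTop 1] with γ hγ
  simp only [outage_iff hτf₀ hτb₀ hμ hm.le (log_pos hγ)]
  rw [measure_min_log_lt_eq ha hb hpos (by linarith)]

/-- diversity-multiplexing tradeoff of network coding through the single
relay `K*` maximizing `(1/(a_k G_k) + 2/(b_k H_k))⁻¹` (the NC end-to-end sum-rate
criterion), which both receives and broadcasts. With
`Ĩ_1 = log(1 + γ a_{K*} G_{K*})`, `Ĩ_2 = log(1 + γ b_{K*} H_{K*})`, the outage
probability satisfies
`limsup_{γ→∞} log ε(γ)/log γ ≤ −n(1 − 3m/(2 min{(1+μ)τ_f, (1+1/μ)τ_b}))`,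
the same DMT as NC with collaborative reception and optimal broadcast relay. -/
theorem nc_optimal_relay_dmt
    {Ω : Type*} [MeasureSpace Ω] [IsProbabilityMeasure (ℙ : Measure Ω)]
    (n : ℕ) (hn : 1 ≤ n) (a b : Fin n → ℝ) (G H : Fin n → Ω → ℝ)
    (ha : ∀ k, 0 < a k) (hb : ∀ k, 0 < b k)
    (hGmeas : ∀ k, Measurable (G k)) (hHmeas : ∀ k, Measurable (H k))
    (hindep : iIndepFun (Sum.elim G H) ℙ)
    (hGexp : ∀ k, IsUnitExp (G k)) (hHexp : ∀ k, IsUnitExp (H k))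
    (K : Ω → Fin n) (hKmeas : Measurable K)
    (hK : ∀ ω k, (1 / (a k * G k ω) + 2 / (b k * H k ω))⁻¹
            ≤ (1 / (a (K ω) * G (K ω) ω) + 2 / (b (K ω) * H (K ω) ω))⁻¹)
    (τf τb μ m : ℝ)
    (hτf : 0 < τf ∧ τf < 1) (hτb : 0 < τb ∧ τb < 1) (hτ : τf + τb = 1)
    (hμ : 0 < μ)
    (hm : 0 < m) (hm' : m < (2/3) * min ((1 + μ) * τf) ((1 + 1/μ) * τb)) :
    limsup (fun γ : ℝ =>
        Real.log (ℙ {ω |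
            (2 * τf / 3) * min (Real.log (1 + γ * (a (K ω) * G (K ω) ω)))
                               (Real.log (1 + γ * (b (K ω) * H (K ω) ω)))
              < (m / (1 + μ)) * Real.log γ ∨
            (2 * τb / 3) * min (Real.log (1 + γ * (a (K ω) * G (K ω) ω)))
                               (Real.log (1 + γ * (b (K ω) * H (K ω) ω)))
              < (m / (1 + 1/μ)) * Real.log γ}).toReal / Real.log γ) atTop
      ≤ -((n : ℝ) * (1 - 3 * m / (2 * min ((1 + μ) * τf) ((1 + 1/μ) * τb)))) :=
  nc_optimal_relay_dmt_general n a b G H ha hb hGmeas hHmeas hindep hGexp hHexp K hK τf τb μ m hτf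
    hτb hμ hm hm'
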